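/- arXiv:1001.5103 — 7 statements merged into one kernel-verified Lean document; each statement's English description precedes it below -/
import Mathlib

section
/- For fixed z in R^d, the function beta -> V_beta(z) = beta * ln(sum_{i=1}^d cosh(z_i/beta)) - beta * ln(d) is nonincreasing in beta on (0, infinity); i.e., if 0 < beta_1 <= beta_2 then V_{beta_1}(z) >= V_{beta_2}(z). -/
noncomputable def Vb {d : ℕ} (β : ℝ) (z : Fin d → ℝ) : ℝ :=
  β * Real.log (∑ i, Real.cosh (z i / β)) - β * Real.log d

/-!
With `s = β₁ / β₂ ∈ (0, 1]` and `c_i = cosh (z_i / β₁)`, concavity of `t ↦ t ^ s` gives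
`cosh (s x) ≤ (cosh x) ^ s` (apply it to `e^x` and `e^{-x}`) and then, by Jensen,
`𝔼 cosh (z_i / β₂) ≤ (𝔼 c_i) ^ s`. Taking logarithms and multiplying by `β₂` turns this into
`V_{β₂}(z) ≤ β₂ s log 𝔼 c_i = V_{β₁}(z)`.
-/

open Real Finset
open scoped BigOperators

theorem ConcaveOn.expect_map_le {ι : Type*} {S : Set ℝ} {f : ℝ → ℝ} (hf : ConcaveOn ℝ S f)
    {t : Finset ι} (ht : t.Nonempty) {p : ι → ℝ} (hp : ∀ i ∈ t, p i ∈ S) :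
    𝔼 i ∈ t, f (p i) ≤ f (𝔼 i ∈ t, p i) := by
  have h := hf.le_map_centerMass (w := fun _ ↦ 1) (fun _ _ ↦ zero_le_one)
    (by simpa using ht.card_pos) hp
  simpa [centerMass, expect_eq_sum_div_card, div_eq_inv_mul] using h

theorem Real.cosh_mul_le_cosh_rpow {s : ℝ} (hs₀ : 0 ≤ s) (hs₁ : s ≤ 1) (x : ℝ) :
    cosh (s * x) ≤ cosh x ^ s := by
  have h := (concaveOn_rpow hs₀ hs₁).2 (Set.mem_Ici.2 (exp_nonneg x))
    (Set.mem_Ici.2 (exp_nonneg (-x))) (by norm_num : (0 : ℝ) ≤ 1 / 2)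
    (by norm_num : (0 : ℝ) ≤ 1 / 2) (by norm_num)
  simp only [smul_eq_mul, ← exp_mul] at h
  rw [cosh_eq, cosh_eq]
  calc (exp (s * x) + exp (-(s * x))) / 2 = 1 / 2 * exp (x * s) + 1 / 2 * exp (-x * s) := by
        ring_nf
    _ ≤ (1 / 2 * exp x + 1 / 2 * exp (-x)) ^ s := h
    _ = ((exp x + exp (-x)) / 2) ^ s := by ring_nf

theorem Finset.expect_cosh_mul_le_rpow {ι : Type*} {t : Finset ι} (ht : t.Nonempty) {s : ℝ}
    (hs₀ : 0 ≤ s) (hs₁ : s ≤ 1) (y : ι → ℝ) :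
    𝔼 i ∈ t, cosh (s * y i) ≤ (𝔼 i ∈ t, cosh (y i)) ^ s :=
  calc 𝔼 i ∈ t, cosh (s * y i) ≤ 𝔼 i ∈ t, cosh (y i) ^ s :=
        expect_le_expect fun i _ ↦ cosh_mul_le_cosh_rpow hs₀ hs₁ (y i)
    _ ≤ (𝔼 i ∈ t, cosh (y i)) ^ s :=
        (concaveOn_rpow hs₀ hs₁).expect_map_le ht fun i _ ↦ Set.mem_Ici.2 (cosh_pos (y i)).le

theorem Finset.antitoneOn_mul_log_expect_cosh_div {ι : Type*} {t : Finset ι} (ht : t.Nonempty)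
    (y : ι → ℝ) : AntitoneOn (fun β ↦ β * log (𝔼 i ∈ t, cosh (y i / β))) (Set.Ioi 0) := by
  intro β₁ (hβ₁ : 0 < β₁) β₂ (hβ₂ : 0 < β₂) hβ₁₂
  set s := β₁ / β₂ with hs
  have hs₀ : 0 ≤ s := by positivity
  have hs₁ : s ≤ 1 := (div_le_one hβ₂).2 hβ₁₂
  have hrescale : ∀ i, y i / β₂ = s * (y i / β₁) := fun i ↦ by rw [hs]; field_simp
  have hpos : 0 < 𝔼 i ∈ t, cosh (y i / β₁) := expect_pos (fun i _ ↦ cosh_pos _) ht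
  calc β₂ * log (𝔼 i ∈ t, cosh (y i / β₂))
      = β₂ * log (𝔼 i ∈ t, cosh (s * (y i / β₁))) := by simp only [hrescale]
    _ ≤ β₂ * log ((𝔼 i ∈ t, cosh (y i / β₁)) ^ s) := by
        gcongr
        exact expect_cosh_mul_le_rpow ht hs₀ hs₁ _
    _ = β₁ * log (𝔼 i ∈ t, cosh (y i / β₁)) := by
        rw [log_rpow hpos, hs]
        field_simp

theorem Vb_eq_mul_log_expect {d : ℕ} (hd : 1 ≤ d) (β : ℝ) (z : Fin d → ℝ) :
    Vb β z = β * log (𝔼 i, cosh (z i / β)) := by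
  have hsum : ∑ i, cosh (z i / β) ≠ 0 := (sum_pos (fun i _ ↦ cosh_pos _) ⟨⟨0, hd⟩, mem_univ _⟩).ne'
  have hd' : (d : ℝ) ≠ 0 := by positivity
  rw [Vb, expect_eq_sum_div_card, card_univ, Fintype.card_fin, log_div hsum hd']
  ring

/-- `β ↦ V_β(z)` is nonincreasing on `(0,∞)`. -/
theorem stmt1 (d : ℕ) (hd : 1 ≤ d) (z : Fin d → ℝ) (β₁ β₂ : ℝ)
    (h1 : 0 < β₁) (h12 : β₁ ≤ β₂) : Vb β₂ z ≤ Vb β₁ z := by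
  rw [Vb_eq_mul_log_expect hd, Vb_eq_mul_log_expect hd]
  exact antitoneOn_mul_log_expect_cosh_div ⟨⟨0, hd⟩, mem_univ _⟩ z h1 (h1.trans_le h12) h12
end

section
/- For V_beta with beta > 0, the directional second derivative satisfies (d^2/dt^2)|_{t=0} V_beta(x + t h) <= ||h||_inf^2 / beta for all x, h in R^d. Equivalently, the Hessian quadratic form of V_beta at any point, evaluated at h, is at most ||h||_inf^2 / beta. -/
/-! The subtracted square is nonnegative, so the form is at most the `cosh`-weighted mean of
`hᵢ²` divided by `β`, and a weighted mean of the `hᵢ²` is at most `maxᵢ hᵢ² = ‖h‖_∞²`. -/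

open Finset

lemma sum_mul_div_sum_le_of_le {ι : Type*} (s : Finset ι) {w a : ι → ℝ} {M : ℝ}
    (hw : ∀ i ∈ s, 0 ≤ w i) (ha : ∀ i ∈ s, a i ≤ M) (hM : 0 ≤ M) :
    (∑ i ∈ s, w i * a i) / ∑ i ∈ s, w i ≤ M := by
  refine div_le_of_le_mul₀ (sum_nonneg hw) hM ?_
  rw [mul_sum]
  exact sum_le_sum fun i hi => by
    rw [mul_comm M]; exact mul_le_mul_of_nonneg_left (ha i hi) (hw i hi)

lemma Pi.sq_apply_le_norm_sq {ι : Type*} [Fintype ι] (h : ι → ℝ) (i : ι) : h i ^ 2 ≤ ‖h‖ ^ 2 := by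
  rw [← sq_abs, ← Real.norm_eq_abs]
  exact pow_le_pow_left₀ (norm_nonneg _) (norm_le_pi_norm h i) 2

theorem stmt4_general (d : ℕ) (β : ℝ) (hβ : 0 < β) (x h : Fin d → ℝ) :
    (1 / β) * ((∑ i, Real.cosh (x i / β) * (h i) ^ 2) / (∑ i, Real.cosh (x i / β))
      - ((∑ i, Real.sinh (x i / β) * h i) / (∑ i, Real.cosh (x i / β))) ^ 2)
    ≤ ‖h‖ ^ 2 / β := by
  have hmean : (∑ i, Real.cosh (x i / β) * (h i) ^ 2) / (∑ i, Real.cosh (x i / β)) ≤ ‖h‖ ^ 2 :=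
    sum_mul_div_sum_le_of_le _ (fun i _ => (Real.cosh_pos _).le)
      (fun i _ => Pi.sq_apply_le_norm_sq h i) (sq_nonneg _)
  rw [one_div_mul_eq_div]
  gcongr
  linarith [sq_nonneg ((∑ i, Real.sinh (x i / β) * h i) / (∑ i, Real.cosh (x i / β)))]

/-- The directional second derivative of `V_β` at `x` in direction `h`, which equals
`(1/β)[(∑ᵢ cosh(xᵢ/β) hᵢ²)/(∑ᵢ cosh(xᵢ/β)) - ((∑ᵢ sinh(xᵢ/β) hᵢ)/(∑ᵢ cosh(xᵢ/β)))²]`,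
is at most `‖h‖_∞² / β`. -/
theorem stmt4 (d : ℕ) (hd : 1 ≤ d) (β : ℝ) (hβ : 0 < β) (x h : Fin d → ℝ) :
    (1 / β) * ((∑ i, Real.cosh (x i / β) * (h i) ^ 2) / (∑ i, Real.cosh (x i / β))
      - ((∑ i, Real.sinh (x i / β) * h i) / (∑ i, Real.cosh (x i / β))) ^ 2)
    ≤ ‖h‖ ^ 2 / β :=
  stmt4_general d β hβ x h
end

section
/- For any x, h in R^d and beta > 0, V_beta(x + h) <= V_beta(x) + <grad V_beta(x), h> + ||h||_inf^2 / (2 beta). -/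
open Real MeasureTheory ProbabilityTheory

theorem sum_mul_exp_le_exp_of_mem_Icc {ι : Type*} [Fintype ι] {w y : ι → ℝ}
    (hw : ∀ i, 0 ≤ w i) (hw1 : ∑ i, w i = 1) {a b : ℝ} (hy : ∀ i, y i ∈ Set.Icc a b) :
    ∑ i, w i * exp (y i) ≤ exp (∑ i, w i * y i + (b - a) ^ 2 / 8) := by
  let _ : MeasurableSpace ι := ⊤
  have hsum : ∑ i, ENNReal.ofReal (w i) = 1 := by
    rw [← ENNReal.ofReal_sum_of_nonneg fun i _ => hw i, hw1, ENNReal.ofReal_one]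
  let p := PMF.ofFintype _ hsum
  have hintegral (f : ι → ℝ) : ∫ i, f i ∂p.toMeasure = ∑ i, w i * f i := by
    simp [p, PMF.integral_eq_sum, ENNReal.toReal_ofReal (hw _)]
  have hmgf := (hasSubgaussianMGF_of_mem_Icc (μ := p.toMeasure) (X := y)
    (measurable_of_countable _).aemeasurable (.of_forall hy)).mgf_le 1
  simp only [mgf, hintegral, one_mul, one_pow, mul_one] at hmgf
  have hc : (((‖b - a‖₊ / 2) ^ 2 : NNReal) : ℝ) / 2 = (b - a) ^ 2 / 8 := by
    push_cast
    rw [norm_eq_abs, div_pow, sq_abs]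
    ring
  simp only [exp_sub, mul_div_assoc', ← Finset.sum_div, hc] at hmgf
  rw [exp_add]
  exact (div_le_iff₀' (exp_pos _)).mp hmgf

theorem log_sum_cosh_add_le {ι : Type*} [Fintype ι] [Nonempty ι] (a t : ι → ℝ) {T : ℝ}
    (ht : ∀ i, |t i| ≤ T) :
    log (∑ i, cosh (a i + t i)) ≤
      log (∑ i, cosh (a i)) + (∑ i, sinh (a i) * t i) / ∑ i, cosh (a i) + T ^ 2 / 2 := by
  set C := ∑ i, cosh (a i)
  have hC : 0 < C := Finset.sum_pos (fun i _ => cosh_pos _) Finset.univ_nonempty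
  let w : ι ⊕ ι → ℝ := Sum.elim (fun i => exp (a i) / (2 * C)) (fun i => exp (-a i) / (2 * C))
  let y : ι ⊕ ι → ℝ := Sum.elim t (fun i => -t i)
  have hw1 : ∑ k, w k = 1 := by
    rw [← div_self hC.ne', Finset.sum_div]
    simp only [w, Fintype.sum_sum_type, Sum.elim_inl, Sum.elim_inr, ← Finset.sum_add_distrib]
    refine Finset.sum_congr rfl fun i _ => ?_
    rw [cosh_eq]; ring
  have hy : ∀ k, y k ∈ Set.Icc (-T) T := by
    rintro (i | i) <;> simp only [y, Sum.elim_inl, Sum.elim_inr, Set.mem_Icc] <;>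
      constructor <;> linarith [abs_le.mp (ht i)]
  have hexp : ∑ k, w k * exp (y k) = (∑ i, cosh (a i + t i)) / C := by
    simp only [w, y, Fintype.sum_sum_type, Sum.elim_inl, Sum.elim_inr, ← Finset.sum_add_distrib,
      Finset.sum_div]
    refine Finset.sum_congr rfl fun i _ => ?_
    rw [cosh_eq, neg_add, exp_add, exp_add]; ring
  have hmean : ∑ k, w k * y k = (∑ i, sinh (a i) * t i) / C := by
    simp only [w, y, Fintype.sum_sum_type, Sum.elim_inl, Sum.elim_inr, ← Finset.sum_add_distrib,
      Finset.sum_div]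
    refine Finset.sum_congr rfl fun i _ => ?_
    rw [sinh_eq]; ring
  have hw : ∀ k, 0 ≤ w k := by
    rintro (i | i) <;> exact div_nonneg (exp_pos _).le (by linarith)
  have key := sum_mul_exp_le_exp_of_mem_Icc hw hw1 hy
  rw [hexp, hmean, show (T - -T) ^ 2 / 8 = T ^ 2 / 2 by ring] at key
  have hS : 0 < ∑ i, cosh (a i + t i) :=
    Finset.sum_pos (fun i _ => cosh_pos _) Finset.univ_nonempty
  have hlog := (log_le_iff_le_exp (div_pos hS hC)).mpr key
  rw [log_div hS.ne' hC.ne'] at hlog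
  linarith

/-- `V_β(x+h) ≤ V_β(x) + ⟨∇V_β(x), h⟩ + ‖h‖_∞²/(2β)`, where the gradient of `V_β`
at `x` has `i`-th component `sinh(xᵢ/β)/∑ⱼ cosh(xⱼ/β)`. -/
theorem stmt5 (d : ℕ) (hd : 1 ≤ d) (β : ℝ) (hβ : 0 < β) (x h : Fin d → ℝ) :
    Vb β (x + h) ≤ Vb β x
      + (∑ i, (Real.sinh (x i / β) / ∑ j, Real.cosh (x j / β)) * h i)
      + ‖h‖ ^ 2 / (2 * β) := by
  have : Nonempty (Fin d) := Fin.pos_iff_nonempty.mp hd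
  have hh : ∀ i, |h i / β| ≤ ‖h‖ / β := fun i => by
    rw [abs_div, abs_of_pos hβ]
    gcongr
    exact norm_le_pi_norm h i
  have key := log_sum_cosh_add_le (fun i => x i / β) (fun i => h i / β) hh
  have hsum : ∑ i, (sinh (x i / β) / ∑ j, cosh (x j / β)) * h i
      = β * ((∑ i, sinh (x i / β) * (h i / β)) / ∑ j, cosh (x j / β)) := by
    rw [Finset.sum_div, Finset.mul_sum]
    refine Finset.sum_congr rfl fun i _ => ?_
    field_simp
  have hnorm : ‖h‖ ^ 2 / (2 * β) = β * ((‖h‖ / β) ^ 2 / 2) := by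
    field_simp
  simp only [Vb, Pi.add_apply, add_div, hsum, hnorm]
  linarith [mul_le_mul_of_nonneg_left key hβ.le]
end

section
/- Let Xi_1, ..., Xi_k be i.i.d. random n-by-n matrices with ||Xi_l||_inf <= L almost surely and E[Xi_l] = W, and let W_k = (1/k) sum_{l=1}^k Xi_l. Then E[||W_k - W||_inf] <= 2 L k^{-1/2} sqrt(2 ln(2 n^2)). -/
/-!
Each entry of `∑ ℓ, Ξ ℓ - k • W` is a sum of `k` independent centred variables with values in
an interval of length `2 L`, so by Hoeffding's lemma it is sub-Gaussian with variance proxy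
`k L²`. For `t ≥ 0`, `exp (t ‖S‖) ≤ ∑ₐ (exp (t Sₐ) + exp (-t Sₐ))` for the sup norm, so Jensen's
inequality gives `t E‖S‖ ≤ log (2 n²) + k L² t² / 2`; optimising in `t` yields
`E‖S‖ ≤ L √k √(2 log (2 n²))`, which is the claim even with `L` in place of `2 L`.
-/

open MeasureTheory ProbabilityTheory Real
open scoped NNReal

lemma exp_mul_norm_le_sum_exp {ι : Type*} [Fintype ι] [Nonempty ι] (y : ι → ℝ) {t : ℝ}
    (ht : 0 ≤ t) : exp (t * ‖y‖) ≤ ∑ i, (exp (t * y i) + exp (-t * y i)) := by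
  obtain ⟨⟨i, hi⟩, -⟩ := IsGreatest.pi_norm y
  simp only at hi
  calc exp (t * ‖y‖) = exp |t * y i| := by
        rw [← hi, abs_mul, abs_of_nonneg ht, Real.norm_eq_abs]
    _ ≤ exp (t * y i) + exp (-t * y i) := by rw [neg_mul]; exact exp_abs_le _
    _ ≤ _ := Finset.single_le_sum (f := fun j => exp (t * y j) + exp (-t * y j))
        (fun j _ => by positivity) (Finset.mem_univ i)

lemma norm_uncurry {ι κ E : Type*} [Fintype ι] [Fintype κ] [SeminormedAddCommGroup E]
    (M : ι → κ → E) : ‖Function.uncurry M‖ = ‖M‖ := by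
  refine le_antisymm ((pi_norm_le_iff_of_nonneg (norm_nonneg _)).2 fun p => ?_)
    ((pi_norm_le_iff_of_nonneg (norm_nonneg _)).2 fun a =>
      (pi_norm_le_iff_of_nonneg (norm_nonneg _)).2 fun b =>
        norm_le_pi_norm (Function.uncurry M) (a, b))
  exact (norm_le_pi_norm (M p.1) p.2).trans (norm_le_pi_norm M p.1)

section MaximalInequality

variable {ι Ω : Type*} [Fintype ι] [Nonempty ι] [MeasurableSpace Ω] {μ : Measure Ω}
  [IsProbabilityMeasure μ] {Y : Ω → ι → ℝ} {c : ℝ≥0}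

lemma mul_integral_norm_le_of_hasSubgaussianMGF
    (hY : ∀ i, HasSubgaussianMGF (fun ω => Y ω i) c μ) {t : ℝ} (ht : 0 ≤ t) :
    t * ∫ ω, ‖Y ω‖ ∂μ ≤ log (2 * Fintype.card ι) + c * t ^ 2 / 2 := by
  have hYint : Integrable Y μ := integrable_pi_iff.2 fun i => (hY i).integrable
  have hexp_int (s : ℝ) (i : ι) : Integrable (fun ω => exp (s * Y ω i)) μ :=
    (hY i).integrable_exp_mul s
  have hsum_int : Integrable (fun ω => ∑ i, (exp (t * Y ω i) + exp (-t * Y ω i))) μ :=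
    integrable_finsetSum _ fun i _ => (hexp_int t i).add (hexp_int (-t) i)
  have hnorm_exp_int : Integrable (fun ω => exp (t * ‖Y ω‖)) μ := by
    refine hsum_int.mono' ?_ (ae_of_all _ fun ω => ?_)
    · exact (continuous_exp.comp_aestronglyMeasurable
        (hYint.aestronglyMeasurable.norm.const_mul t))
    · rw [norm_of_nonneg (exp_pos _).le]
      exact exp_mul_norm_le_sum_exp _ ht
  have jensen : exp (t * ∫ ω, ‖Y ω‖ ∂μ) ≤ ∫ ω, exp (t * ‖Y ω‖) ∂μ := by
    have h := convexOn_exp.map_integral_le continuous_exp.continuousOn isClosed_univ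
      (ae_of_all _ fun _ => Set.mem_univ _) (hYint.norm.const_mul t) hnorm_exp_int
    rwa [integral_const_mul] at h
  have union_bound : ∫ ω, exp (t * ‖Y ω‖) ∂μ ≤ 2 * Fintype.card ι * exp (c * t ^ 2 / 2) :=
    calc ∫ ω, exp (t * ‖Y ω‖) ∂μ
        ≤ ∫ ω, ∑ i, (exp (t * Y ω i) + exp (-t * Y ω i)) ∂μ :=
          integral_mono hnorm_exp_int hsum_int fun ω => exp_mul_norm_le_sum_exp _ ht
      _ = ∑ i, (mgf (fun ω => Y ω i) μ t + mgf (fun ω => Y ω i) μ (-t)) := by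
          rw [integral_finsetSum]
          · exact Finset.sum_congr rfl fun i _ => integral_add (hexp_int t i) (hexp_int (-t) i)
          · exact fun i _ => (hexp_int t i).add (hexp_int (-t) i)
      _ ≤ ∑ _i : ι, (exp (c * t ^ 2 / 2) + exp (c * t ^ 2 / 2)) :=
          Finset.sum_le_sum fun i _ =>
            add_le_add ((hY i).mgf_le t) (by simpa using (hY i).mgf_le (-t))
      _ = 2 * Fintype.card ι * exp (c * t ^ 2 / 2) := by
          rw [Finset.sum_const, Finset.card_univ, nsmul_eq_mul]; ring
  calc t * ∫ ω, ‖Y ω‖ ∂μ = log (exp (t * ∫ ω, ‖Y ω‖ ∂μ)) := (log_exp _).symm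
    _ ≤ log (2 * Fintype.card ι * exp (c * t ^ 2 / 2)) :=
        log_le_log (exp_pos _) (jensen.trans union_bound)
    _ = log (2 * Fintype.card ι) + c * t ^ 2 / 2 := by
        rw [log_mul (by positivity) (exp_pos _).ne', log_exp]

lemma integral_norm_le_of_hasSubgaussianMGF
    (hY : ∀ i, HasSubgaussianMGF (fun ω => Y ω i) c μ) :
    ∫ ω, ‖Y ω‖ ∂μ ≤ sqrt (2 * c * log (2 * Fintype.card ι)) := by
  set A := log (2 * Fintype.card ι)
  have hA : 0 < A := log_pos (by
    have : 1 ≤ (Fintype.card ι : ℝ) := by exact_mod_cast Fintype.card_pos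
    linarith)
  have hbound (t : ℝ) (ht : 0 ≤ t) := mul_integral_norm_le_of_hasSubgaussianMGF hY ht
  rcases c.coe_nonneg.eq_or_lt with hc | hc
  · -- `t * E ≤ A` for every `t ≥ 0` forces `E ≤ 0`
    rw [← hc, mul_zero, zero_mul, Real.sqrt_zero]
    by_contra! hE
    have h := hbound ((A + 1) / ∫ ω, ‖Y ω‖ ∂μ) (by positivity)
    rw [← hc, div_mul_cancel₀ _ hE.ne'] at h
    linarith
  · -- the optimal `t` makes both terms of `A / t + c * t / 2` equal
    set t := sqrt (2 * A / c)
    have ht : 0 < t := by positivity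
    have hct : c * t ^ 2 / 2 = A := by
      rw [sq_sqrt (by positivity)]
      field_simp
    have h := hbound t ht.le
    rw [hct] at h
    calc ∫ ω, ‖Y ω‖ ∂μ ≤ 2 * A / t := by rw [le_div_iff₀ ht]; linarith
      _ = sqrt (2 * c * A) := by
        rw [div_eq_iff ht.ne', ← sqrt_mul (by positivity),
          show 2 * c * A * (2 * A / c) = (2 * A) ^ 2 by field_simp,
          sqrt_sq (by positivity)]

end MaximalInequality

section EmpiricalMean

variable {κ ι Ω : Type*} [Fintype κ] [Fintype ι] [MeasurableSpace Ω] {μ : Measure Ω}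
  [IsProbabilityMeasure μ] {X : κ → Ω → ι → ℝ} {L : ℝ} {W : ι → ℝ}

lemma hasSubgaussianMGF_sum_sub_apply (hmeas : ∀ j, Measurable (X j)) (hindep : iIndepFun X μ)
    (hbound : ∀ j, ∀ᵐ ω ∂μ, ‖X j ω‖ ≤ L) (hmean : ∀ j i, ∫ ω, X j ω i ∂μ = W i) (i : ι) :
    HasSubgaussianMGF (fun ω => (∑ j, X j ω - (Fintype.card κ : ℝ) • W) i)
      (Fintype.card κ * ‖L‖₊ ^ 2) μ := by
  have hoeffding (j : κ) : HasSubgaussianMGF (fun ω => X j ω i - W i) (‖L‖₊ ^ 2) μ := by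
    have h := hasSubgaussianMGF_of_mem_Icc (X := fun ω => X j ω i) (a := -L) (b := L)
      ((measurable_pi_apply i).comp (hmeas j)).aemeasurable
      (by filter_upwards [hbound j] with ω hω
          exact abs_le.1 ((norm_le_pi_norm (X j ω) i).trans hω))
    rwa [hmean, show ‖L - -L‖₊ / 2 = ‖L‖₊ by ext; simp [← two_mul]] at h
  have hsum := HasSubgaussianMGF.sum_of_iIndepFun
    (hindep.comp (fun _ x => x i - W i) fun _ => by fun_prop) (s := Finset.univ)
    fun j _ => hoeffding j
  rw [Finset.sum_const, Finset.card_univ, nsmul_eq_mul] at hsum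
  refine hsum.congr (ae_of_all _ fun ω => ?_)
  simp [Finset.sum_apply, Finset.sum_sub_distrib]

theorem integral_norm_inv_card_smul_sum_sub_le [Nonempty κ] [Nonempty ι]
    (hmeas : ∀ j, Measurable (X j)) (hindep : iIndepFun X μ) (hbound : ∀ j, ∀ᵐ ω ∂μ, ‖X j ω‖ ≤ L)
    (hmean : ∀ j i, ∫ ω, X j ω i ∂μ = W i) :
    ∫ ω, ‖(Fintype.card κ : ℝ)⁻¹ • ∑ j, X j ω - W‖ ∂μ
      ≤ L / sqrt (Fintype.card κ) * sqrt (2 * log (2 * Fintype.card ι)) := by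
  set k : ℝ := ((Fintype.card κ : ℕ) : ℝ)
  have hk : 0 < k := Nat.cast_pos.2 Fintype.card_pos
  have hL : 0 ≤ L := by
    obtain ⟨ω, hω⟩ := (hbound (Classical.arbitrary κ)).exists
    exact (norm_nonneg _).trans hω
  have hmax := integral_norm_le_of_hasSubgaussianMGF
    (hasSubgaussianMGF_sum_sub_apply hmeas hindep hbound hmean)
  have hnorm (ω : Ω) : ‖k⁻¹ • ∑ j, X j ω - W‖ = k⁻¹ * ‖∑ j, X j ω - k • W‖ := by
    rw [← norm_smul_of_nonneg (inv_nonneg.2 hk.le), smul_sub, smul_smul,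
      inv_mul_cancel₀ hk.ne', one_smul]
  simp_rw [hnorm, integral_const_mul]
  calc k⁻¹ * ∫ ω, ‖∑ j, X j ω - k • W‖ ∂μ
      ≤ k⁻¹ * sqrt (2 * ((Fintype.card κ * ‖L‖₊ ^ 2 : ℝ≥0) : ℝ)
          * log (2 * Fintype.card ι)) :=
        mul_le_mul_of_nonneg_left hmax (by positivity)
    _ = L / sqrt k * sqrt (2 * log (2 * Fintype.card ι)) := by
        have hsk : sqrt k ^ 2 = k := sq_sqrt hk.le
        rw [NNReal.coe_mul, NNReal.coe_pow, coe_nnnorm, norm_eq_abs, sq_abs, NNReal.coe_natCast,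
          show 2 * (k * L ^ 2) * log (2 * Fintype.card ι)
            = L ^ 2 * k * (2 * log (2 * Fintype.card ι)) by ring,
          sqrt_mul (by positivity), sqrt_mul (sq_nonneg _), sqrt_sq hL]
        field_simp
        rw [hsk]
        ring

end EmpiricalMean

theorem stmt8_general (n : ℕ) (hn : 1 ≤ n) (k : ℕ) (hk : 1 ≤ k)
    {Ω : Type*} [MeasurableSpace Ω] (μ : Measure Ω) [IsProbabilityMeasure μ]
    (Ξ : Fin k → Ω → (Fin n → Fin n → ℝ)) (L : ℝ)
    (hmeas : ∀ ℓ, Measurable (Ξ ℓ))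
    (hindep : iIndepFun Ξ μ)
    (hbound : ∀ ℓ, ∀ᵐ ω ∂μ, ‖Ξ ℓ ω‖ ≤ L)
    (W : Fin n → Fin n → ℝ)
    (hmean : ∀ ℓ a b, ∫ ω, Ξ ℓ ω a b ∂μ = W a b) :
    ∫ ω, ‖(k : ℝ)⁻¹ • ∑ ℓ, Ξ ℓ ω - W‖ ∂μ
      ≤ 2 * L * (k : ℝ) ^ (-(1 : ℝ) / 2) * Real.sqrt (2 * Real.log (2 * n ^ 2)) := by
  have : Nonempty (Fin k) := ⟨⟨0, hk⟩⟩
  have : Nonempty (Fin n) := ⟨⟨0, hn⟩⟩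
  have hL : 0 ≤ L := by
    obtain ⟨ω, hω⟩ := (hbound ⟨0, hk⟩).exists
    exact (norm_nonneg _).trans hω
  have h := integral_norm_inv_card_smul_sum_sub_le (X := fun ℓ ω => Function.uncurry (Ξ ℓ ω))
    (W := Function.uncurry W) (fun ℓ => measurable_uncurry.comp (hmeas ℓ))
    (hindep.comp _ fun _ => measurable_uncurry)
    (fun ℓ => by simpa only [norm_uncurry] using hbound ℓ) (fun ℓ p => hmean ℓ p.1 p.2)
  have huncurry (ω : Ω) : (k : ℝ)⁻¹ • ∑ ℓ, Function.uncurry (Ξ ℓ ω) - Function.uncurry W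
      = Function.uncurry ((k : ℝ)⁻¹ • ∑ ℓ, Ξ ℓ ω - W) := by
    ext ⟨a, b⟩
    simp [Finset.sum_apply]
  simp only [Fintype.card_fin, Fintype.card_prod, huncurry, norm_uncurry] at h
  refine h.trans ?_
  rw [neg_div, Real.rpow_neg (Nat.cast_nonneg k), ← Real.sqrt_eq_rpow, Nat.cast_mul, ← sq,
    div_eq_mul_inv]
  gcongr
  linarith

/-- If `Ξ₁,…,Ξ_k` are i.i.d. random `n×n` matrices (encoded as `Fin n → Fin n → ℝ`, whose
norm is the entrywise sup norm) with `‖Ξ_ℓ‖_∞ ≤ L` a.s. and entrywise mean `W`, then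
`W_k = (1/k) ∑_ℓ Ξ_ℓ` satisfies `E[‖W_k - W‖_∞] ≤ 2 L k^{-1/2} √(2 ln(2n²))`. -/
theorem stmt8 (n : ℕ) (hn : 1 ≤ n) (k : ℕ) (hk : 1 ≤ k)
    {Ω : Type*} [MeasurableSpace Ω] (μ : Measure Ω) [IsProbabilityMeasure μ]
    (Ξ : Fin k → Ω → (Fin n → Fin n → ℝ)) (L : ℝ)
    (hmeas : ∀ ℓ, Measurable (Ξ ℓ))
    (hindep : iIndepFun Ξ μ)
    (hident : ∀ ℓ, Measure.map (Ξ ℓ) μ = Measure.map (Ξ ⟨0, hk⟩) μ)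
    (hbound : ∀ ℓ, ∀ᵐ ω ∂μ, ‖Ξ ℓ ω‖ ≤ L)
    (W : Fin n → Fin n → ℝ)
    (hmean : ∀ ℓ a b, ∫ ω, Ξ ℓ ω a b ∂μ = W a b) :
    ∫ ω, ‖(k : ℝ)⁻¹ • ∑ ℓ, Ξ ℓ ω - W‖ ∂μ
      ≤ 2 * L * (k : ℝ) ^ (-(1 : ℝ) / 2) * Real.sqrt (2 * Real.log (2 * n ^ 2)) :=
  stmt8_general n hn k hk μ Ξ L hmeas hindep hbound W hmean
end

section
/- Let mu, nu be jointly Gaussian real random variables with mean zero, E[mu^2] <= 1, E[nu^2] <= 1, and E[mu nu] = alpha. Then there exists a symmetric 2x2 matrix B with eigenvalues lambda_1, lambda_2 satisfying lambda_1 + lambda_2 = alpha and lambda_1^2 + lambda_2^2 <= 1, and an R^2-valued standard Gaussian z with mu * nu = z^T B z. -/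
open MeasureTheory ProbabilityTheory
open scoped NNReal

/-! Write `μ = p u + q v` and `ν = r u + s v` with `u, v` independent standard Gaussians and put
`x = (p, q)`, `y = (r, s)`. Then `μ ν = zᵀ B z` for `z = (u, v)` and `B = (x yᵀ + y xᵀ) / 2`.
The trace of `B` is `⟪x, y⟫ = E[μ ν] = α`, and the sum of its squared eigenvalues is
`‖B‖_F² = (⟪x, y⟫² + ‖x‖² ‖y‖²) / 2 ≤ ‖x‖² ‖y‖² = E[μ²] E[ν²] ≤ 1` by Cauchy–Schwarz. -/

namespace ProbabilityTheory.HasLaw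

variable {Ω : Type*} [MeasurableSpace Ω] {P : Measure Ω} {X : Ω → ℝ} {m : ℝ} {v : ℝ≥0}

lemma memLp_gaussianReal (hX : HasLaw X (gaussianReal m v) P) (p : ℝ≥0) : MemLp X p P := by
  have h : MemLp id p (P.map X) := hX.map_eq ▸ memLp_id_gaussianReal p
  exact h.comp_of_map hX.aemeasurable

lemma integral_gaussianReal (hX : HasLaw X (gaussianReal m v) P) : ∫ ω, X ω ∂P = m :=
  hX.integral_eq.trans integral_id_gaussianReal

lemma integral_sq_gaussianReal [IsProbabilityMeasure P] (hX : HasLaw X (gaussianReal m v) P) :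
    ∫ ω, X ω ^ 2 ∂P = v + m ^ 2 := by
  have h := variance_eq_sub (hX.memLp_gaussianReal 2)
  rw [hX.variance_eq, variance_id_gaussianReal, hX.integral_gaussianReal, eq_sub_iff_add_eq] at h
  exact h.symm

end ProbabilityTheory.HasLaw

section

variable {Ω : Type*} [MeasurableSpace Ω] {P : Measure Ω} {u v : Ω → ℝ}

lemma integral_linearCombination_mul_of_orthonormal (hu : MemLp u 2 P) (hv : MemLp v 2 P)
    (hu2 : ∫ ω, u ω ^ 2 ∂P = 1) (hv2 : ∫ ω, v ω ^ 2 ∂P = 1) (huv : ∫ ω, u ω * v ω ∂P = 0)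
    (a b c d : ℝ) :
    ∫ ω, (a * u ω + b * v ω) * (c * u ω + d * v ω) ∂P = a * c + b * d := by
  have hu2i : Integrable (fun ω => u ω ^ 2) P := hu.integrable_sq
  have hv2i : Integrable (fun ω => v ω ^ 2) P := hv.integrable_sq
  have huvi : Integrable (fun ω => u ω * v ω) P := hu.integrable_mul hv
  calc ∫ ω, (a * u ω + b * v ω) * (c * u ω + d * v ω) ∂P
      = ∫ ω, (a * c) * u ω ^ 2 + (a * d + b * c) * (u ω * v ω) + (b * d) * v ω ^ 2 ∂P := by
        congr 1; ext ω; ring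
    _ = a * c + b * d := by
        rw [integral_add (by fun_prop) (hv2i.const_mul _),
          integral_add (hu2i.const_mul _) (huvi.const_mul _), integral_const_mul,
          integral_const_mul, integral_const_mul, hu2, hv2, huv]
        ring

end

open Polynomial in
lemma exists_charpoly_eq_of_fin_two_symm (a b c : ℝ) :
    ∃ lam : Fin 2 → ℝ, (!![a, b; b, c]).charpoly = (X - C (lam 0)) * (X - C (lam 1)) ∧
      lam 0 + lam 1 = a + c ∧ lam 0 ^ 2 + lam 1 ^ 2 = a ^ 2 + 2 * b ^ 2 + c ^ 2 := by
  set d := √((a - c) ^ 2 + 4 * b ^ 2)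
  have hd : d ^ 2 = (a - c) ^ 2 + 4 * b ^ 2 := Real.sq_sqrt (by positivity)
  refine ⟨![(a + c + d) / 2, (a + c - d) / 2], ?_, ?_, ?_⟩ <;>
    simp only [Matrix.cons_val_zero, Matrix.cons_val_one, Matrix.cons_val_fin_one]
  · set l₀ := (a + c + d) / 2
    set l₁ := (a + c - d) / 2
    have htr : a + c = l₀ + l₁ := by ring
    have hdet : a * c - b * b = l₀ * l₁ := by linear_combination hd / 4
    rw [Matrix.charpoly_fin_two, Matrix.trace_fin_two_of, Matrix.det_fin_two_of, htr, hdet,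
      C_add, C_mul]
    ring
  · ring
  · linear_combination hd / 2

/-- Let `μ, ν` be jointly Gaussian mean-zero real random variables (i.e. a linear image of a
pair of independent standard Gaussians) with `E[μ²] ≤ 1`, `E[ν²] ≤ 1`, `E[μν] = α`. Then
there is a symmetric `2×2` matrix `B` with eigenvalues `λ₁, λ₂` satisfying `λ₁ + λ₂ = α`,
`λ₁² + λ₂² ≤ 1`, and a standard Gaussian vector `z` in `ℝ²` with `μ ν = zᵀ B z` a.s. -/
theorem stmt11 {Ω : Type*} [MeasurableSpace Ω] (P : Measure Ω) [IsProbabilityMeasure P]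
    (mu nu : Ω → ℝ) (α : ℝ)
    (hgauss : ∃ (u v : Ω → ℝ) (p q r s : ℝ),
      Measurable u ∧ Measurable v ∧ IndepFun u v P ∧
      Measure.map u P = gaussianReal 0 1 ∧ Measure.map v P = gaussianReal 0 1 ∧
      mu = (fun ω => p * u ω + q * v ω) ∧ nu = (fun ω => r * u ω + s * v ω))
    (hm : ∫ ω, (mu ω) ^ 2 ∂P ≤ 1) (hn : ∫ ω, (nu ω) ^ 2 ∂P ≤ 1)
    (hα : ∫ ω, mu ω * nu ω ∂P = α) :
    ∃ (B : Matrix (Fin 2) (Fin 2) ℝ) (lam : Fin 2 → ℝ) (z : Ω → Fin 2 → ℝ),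
      B.IsSymm ∧
      B.charpoly =
        (Polynomial.X - Polynomial.C (lam 0)) * (Polynomial.X - Polynomial.C (lam 1)) ∧
      lam 0 + lam 1 = α ∧ (lam 0) ^ 2 + (lam 1) ^ 2 ≤ 1 ∧
      IndepFun (fun ω => z ω 0) (fun ω => z ω 1) P ∧
      Measure.map (fun ω => z ω 0) P = gaussianReal 0 1 ∧
      Measure.map (fun ω => z ω 1) P = gaussianReal 0 1 ∧
      ∀ᵐ ω ∂P, mu ω * nu ω = ∑ i, ∑ j, z ω i * B i j * z ω j := by
  obtain ⟨u, v, p, q, r, s, hu, hv, huv, hmapu, hmapv, rfl, rfl⟩ := hgauss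
  have hu' : HasLaw u (gaussianReal 0 1) P := ⟨hu.aemeasurable, hmapu⟩
  have hv' : HasLaw v (gaussianReal 0 1) P := ⟨hv.aemeasurable, hmapv⟩
  have hcov := integral_linearCombination_mul_of_orthonormal (hu'.memLp_gaussianReal 2)
    (hv'.memLp_gaussianReal 2) (by simpa using hu'.integral_sq_gaussianReal)
    (by simpa using hv'.integral_sq_gaussianReal)
    (by rw [huv.integral_fun_mul_eq_mul_integral hu.aestronglyMeasurable
      hv.aestronglyMeasurable, hu'.integral_gaussianReal, zero_mul])
  simp only [sq, hcov] at hm hn hα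
  obtain ⟨lam, hchar, htr, hsq⟩ :=
    exists_charpoly_eq_of_fin_two_symm (p * r) ((p * s + q * r) / 2) (q * s)
  refine ⟨_, lam, fun ω => ![u ω, v ω], ?_, hchar, by linarith, ?_, huv, hmapu, hmapv, ?_⟩
  · ext i j
    fin_cases i <;> fin_cases j <;> rfl
  · rw [hsq]
    nlinarith [mul_nonneg (sub_nonneg.2 hm) (sub_nonneg.2 hn), sq_nonneg (p * s - q * r)]
  · refine Filter.Eventually.of_forall fun ω => ?_
    simp only [Matrix.of_apply, Matrix.cons_val', Matrix.cons_val_fin_one, Fin.sum_univ_two,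
      Matrix.cons_val_zero, Matrix.cons_val_one]
    ring
end

section
/- For the norm ||A|| = min{ t : exists M, N with [[M, A],[A^T, N]] PSD, M_ii <= t for all i, N_jj <= t for all j } on R^{m x n}, one has ||A||_inf <= ||A|| <= sqrt(min(m,n)) * ||A||_inf for every A. -/
/-!
Testing the block matrix on `e_i ± e_j` shows `2 |A i j| ≤ M i i + N j j`, which gives the lower
bound. For the upper bound, with `s = √n · ‖A‖_∞` the Gram matrix
`s⁻¹ [A; s I] [A; s I]ᵀ = [[s⁻¹ A Aᵀ, A], [Aᵀ, s I]]` is PSD, and each row of `A` has squared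
length at most `n ‖A‖_∞² = s²`, so all diagonal entries are at most `s`. Swapping the roles of
rows and columns gives `√m · ‖A‖_∞`.
-/

open Matrix

noncomputable def matNorm {m n : ℕ} (A : Matrix (Fin m) (Fin n) ℝ) : ℝ :=
  sInf {t : ℝ | ∃ (M : Matrix (Fin m) (Fin m) ℝ) (N : Matrix (Fin n) (Fin n) ℝ),
    (Matrix.fromBlocks M A Aᵀ N).PosSemidef ∧ (∀ i, M i i ≤ t) ∧ (∀ j, N j j ≤ t)}

namespace Matrix

variable {m n : Type*}

theorem PosSemidef.fromBlocks_swap {R : Type*} [CommRing R] [PartialOrder R] [StarRing R]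
    {A : Matrix m m R} {B : Matrix m n R} {C : Matrix n m R} {D : Matrix n n R}
    (h : (fromBlocks A B C D).PosSemidef) : (fromBlocks D C B A).PosSemidef :=
  fromBlocks_submatrix_sum_swap_sum_swap A B C D ▸ h.submatrix Sum.swap

variable [Fintype m] [Fintype n]

theorem PosSemidef.two_mul_abs_le_of_fromBlocks {M : Matrix m m ℝ} {A : Matrix m n ℝ}
    {N : Matrix n n ℝ} (h : (fromBlocks M A Aᵀ N).PosSemidef) (i : m) (j : n) :
    2 * |A i j| ≤ M i i + N j j := by
  classical
  have hform (c : ℝ) : 0 ≤ M i i + 2 * c * A i j + c ^ 2 * N j j := by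
    have := h.dotProduct_mulVec_nonneg (Sum.elim (Pi.single i 1) (Pi.single j c))
    simp [fromBlocks_mulVec, sumElim_dotProduct_sumElim, mulVec_single] at this
    linarith
  cases abs_cases (A i j) <;> nlinarith [hform 1, hform (-1)]

theorem fromBlocks_inv_smul_mul_transpose_posSemidef [DecidableEq n] {s : ℝ} (hs : 0 < s)
    (A : Matrix m n ℝ) : (fromBlocks (s⁻¹ • (A * Aᵀ)) A Aᵀ (s • 1)).PosSemidef := by
  have hgram : fromBlocks (s⁻¹ • (A * Aᵀ)) A Aᵀ (s • 1) =
      s⁻¹ • (fromRows A (s • 1 : Matrix n n ℝ) * (fromRows A (s • 1 : Matrix n n ℝ))ᴴ) := by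
    simp only [conjTranspose_eq_transpose_of_trivial, transpose_fromRows, fromRows_mul_fromCols,
      fromBlocks_smul, transpose_smul, transpose_one, Matrix.mul_smul, Matrix.smul_mul,
      Matrix.mul_one, Matrix.one_mul, smul_smul, inv_mul_cancel₀ hs.ne',
      inv_mul_cancel_left₀ hs.ne', one_smul]
  rw [hgram]
  exact (posSemidef_self_mul_conjTranspose _).smul (inv_nonneg.2 hs.le)

end Matrix

section MatNormAdmissible

variable {m n : Type*}

def MatNormAdmissible (A : Matrix m n ℝ) (t : ℝ) : Prop :=
  ∃ (M : Matrix m m ℝ) (N : Matrix n n ℝ),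
    (fromBlocks M A Aᵀ N).PosSemidef ∧ (∀ i, M i i ≤ t) ∧ ∀ j, N j j ≤ t

theorem matNorm_eq_sInf {m n : ℕ} (A : Matrix (Fin m) (Fin n) ℝ) :
    matNorm A = sInf {t | MatNormAdmissible A t} :=
  rfl

variable {A : Matrix m n ℝ} {t a : ℝ}

theorem MatNormAdmissible.abs_le [Fintype m] [Fintype n] (h : MatNormAdmissible A t)
    (i : m) (j : n) : |A i j| ≤ t := by
  obtain ⟨M, N, hP, hM, hN⟩ := h
  linarith [hP.two_mul_abs_le_of_fromBlocks i j, hM i, hN j]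

theorem MatNormAdmissible.nonneg [Nonempty m] (h : MatNormAdmissible A t) : 0 ≤ t := by
  obtain ⟨M, N, hP, hM, -⟩ := h
  let i : m := Classical.arbitrary m
  simpa using hP.diag_nonneg (i := Sum.inl i) |>.trans (hM i)

theorem MatNormAdmissible.transpose (h : MatNormAdmissible Aᵀ t) : MatNormAdmissible A t := by
  obtain ⟨M, N, hP, hM, hN⟩ := h
  exact ⟨N, M, by simpa using hP.fromBlocks_swap, hN, hM⟩

theorem matNormAdmissible_sqrt_card_mul [Fintype m] [Fintype n]
    (ha : 0 ≤ a) (hA : ∀ i j, |A i j| ≤ a) :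
    MatNormAdmissible A (√(Fintype.card n) * a) := by
  classical
  set s := √(Fintype.card n) * a
  obtain hs | hs := (mul_nonneg (Real.sqrt_nonneg _) ha : 0 ≤ s).eq_or_lt
  · have hA0 : A = 0 := by
      ext i j
      have hcard : 0 < √(Fintype.card n) := by simpa using Fintype.card_pos_iff.2 ⟨j⟩
      have ha0 : a = 0 := by simpa [s, hcard.ne'] using hs.symm
      simpa [ha0] using hA i j
    exact ⟨0, 0, by simpa [hA0] using PosSemidef.zero, fun _ ↦ hs.le, fun _ ↦ hs.le⟩
  refine ⟨s⁻¹ • (A * Aᵀ), s • 1, fromBlocks_inv_smul_mul_transpose_posSemidef hs A,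
    fun i ↦ ?_, fun j ↦ by simp⟩
  have hrow : ∑ j, A i j * A i j ≤ s * s := calc
    ∑ j, A i j * A i j ≤ ∑ _j : n, a ^ 2 :=
      Finset.sum_le_sum fun j _ ↦ by
        rw [← sq, ← sq_abs]
        exact pow_le_pow_left₀ (abs_nonneg _) (hA i j) 2
    _ = s * s := by
      rw [Finset.sum_const, Finset.card_univ, nsmul_eq_mul, mul_mul_mul_comm,
        Real.mul_self_sqrt (Nat.cast_nonneg _), sq]
  calc (s⁻¹ • (A * Aᵀ)) i i = s⁻¹ * ∑ j, A i j * A i j := by simp [mul_apply]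
    _ ≤ s⁻¹ * (s * s) := by gcongr
    _ = s := inv_mul_cancel_left₀ hs.ne' s

theorem matNormAdmissible_sqrt_min_card_mul [Fintype m] [Fintype n]
    (ha : 0 ≤ a) (hA : ∀ i j, |A i j| ≤ a) :
    MatNormAdmissible A (√(min (Fintype.card m) (Fintype.card n)) * a) := by
  rcases le_total (Fintype.card m) (Fintype.card n) with hmn | hnm
  · rw [min_eq_left (Nat.cast_le.2 hmn)]
    exact (matNormAdmissible_sqrt_card_mul ha fun j i ↦ hA i j).transpose
  · rw [min_eq_right (Nat.cast_le.2 hnm)]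
    exact matNormAdmissible_sqrt_card_mul ha hA

end MatNormAdmissible

theorem stmt16_general (m n : ℕ) (hm : 1 ≤ m) (A : Matrix (Fin m) (Fin n) ℝ) :
    (⨆ p : Fin m × Fin n, |A p.1 p.2|) ≤ matNorm A ∧
    matNorm A ≤ Real.sqrt (min m n) * ⨆ p : Fin m × Fin n, |A p.1 p.2| := by
  have : Nonempty (Fin m) := ⟨⟨0, hm⟩⟩
  set a := ⨆ p : Fin m × Fin n, |A p.1 p.2|
  have hA (i j) : |A i j| ≤ a :=
    le_ciSup (f := fun p : Fin m × Fin n ↦ |A p.1 p.2|) (Set.finite_range _).bddAbove (i, j)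
  have ha : 0 ≤ a := Real.iSup_nonneg fun _ ↦ abs_nonneg _
  have hadm : MatNormAdmissible A (√(min m n) * a) := by
    simpa using matNormAdmissible_sqrt_min_card_mul ha hA
  rw [matNorm_eq_sInf]
  have hbdd : BddBelow {t | MatNormAdmissible A t} := ⟨0, fun _ ht ↦ ht.nonneg⟩
  refine ⟨Real.iSup_le (fun p ↦ ?_) (Real.sInf_nonneg fun _ ht ↦ ht.nonneg), csInf_le hbdd hadm⟩
  exact le_csInf ⟨_, hadm⟩ fun _ ht ↦ ht.abs_le p.1 p.2

/-- `‖A‖_∞ ≤ ‖A‖ ≤ √(min(m,n)) ‖A‖_∞`, where `‖A‖_∞ = max_{i,j} |A_{ij}|`. -/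
theorem stmt16 (m n : ℕ) (hm : 1 ≤ m) (hn : 1 ≤ n) (A : Matrix (Fin m) (Fin n) ℝ) :
    (⨆ p : Fin m × Fin n, |A p.1 p.2|) ≤ matNorm A ∧
    matNorm A ≤ Real.sqrt (min m n) * ⨆ p : Fin m × Fin n, |A p.1 p.2| :=
  stmt16_general m n hm A
end

section
/- If n >= 2k, then for every n x n real matrix B of rank at most k, ||I_n - B||_inf >= 1/(2 sqrt(k)), where ||X||_inf = max_{i,j} |X_{ij}|. -/
/-!
Restrict to the leading `2k × 2k` block `B'`. The matrix `I - B'` fixes the kernel of `B'`, of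
dimension at least `2k - rank B' ≥ k`, so Bessel's inequality for the rows of `I - B'` against an
orthonormal basis of that kernel gives `‖I - B'‖_F² ≥ k`. Hence one of the `(2k)²` entries has
square at least `k / (2k)² = 1 / (4k)`.
-/

open Matrix Module
open scoped RealInnerProductSpace

variable {ι κ μ : Type*} [Fintype ι] [Fintype κ] [Fintype μ]

theorem Orthonormal.sum_norm_toEuclideanLin_sq_le [DecidableEq ι] (A : Matrix μ ι ℝ)
    {v : κ → EuclideanSpace ℝ ι} (hv : Orthonormal ℝ v) :
    ∑ j, ‖A.toEuclideanLin (v j)‖ ^ 2 ≤ ∑ a, ∑ i, A a i ^ 2 := by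
  have entry (a : μ) (x : EuclideanSpace ℝ ι) :
      A.toEuclideanLin x a = ⟪x, WithLp.toLp 2 (A a)⟫ := by
    simp [EuclideanSpace.inner_eq_star_dotProduct, mulVec, dotProduct_comm]
  calc ∑ j, ‖A.toEuclideanLin (v j)‖ ^ 2 = ∑ a, ∑ j, ⟪v j, WithLp.toLp 2 (A a)⟫ ^ 2 := by
        simp_rw [EuclideanSpace.real_norm_sq_eq, entry]
        exact Finset.sum_comm
    _ ≤ ∑ a, ‖WithLp.toLp 2 (A a)‖ ^ 2 := by
        gcongr with a
        simpa using hv.sum_inner_products_le (WithLp.toLp 2 (A a)) (s := Finset.univ)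
    _ = ∑ a, ∑ i, A a i ^ 2 := by simp [EuclideanSpace.real_norm_sq_eq]

theorem finrank_ker_toEuclideanLin_le_sum_sq_one_sub [DecidableEq ι] (B : Matrix ι ι ℝ) :
    (finrank ℝ (LinearMap.ker B.toEuclideanLin) : ℝ) ≤ ∑ a, ∑ i, (1 - B) a i ^ 2 := by
  set V := LinearMap.ker B.toEuclideanLin
  let v := stdOrthonormalBasis ℝ V
  have hv : Orthonormal ℝ fun j ↦ (v j : EuclideanSpace ℝ ι) :=
    v.orthonormal.comp_linearIsometry V.subtypeₗᵢ
  have fixed (j) : (1 - B).toEuclideanLin (v j) = v j := by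
    simp [LinearMap.mem_ker.mp (v j).2]
  calc (finrank ℝ V : ℝ) = ∑ j, ‖(v j : EuclideanSpace ℝ ι)‖ ^ 2 := by simp [hv.1]
    _ = ∑ j, ‖(1 - B).toEuclideanLin (v j)‖ ^ 2 := by simp only [fixed]
    _ ≤ _ := hv.sum_norm_toEuclideanLin_sq_le (1 - B)

theorem rank_add_finrank_ker_toEuclideanLin {𝕜 : Type*} [RCLike 𝕜] [DecidableEq ι]
    (B : Matrix μ ι 𝕜) :
    B.rank + finrank 𝕜 (LinearMap.ker B.toEuclideanLin) = Fintype.card ι := by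
  rw [rank_eq_finrank_range_toLin B (EuclideanSpace.basisFun μ 𝕜).toBasis
    (EuclideanSpace.basisFun ι 𝕜).toBasis, ← toEuclideanLin_eq_toLin_orthonormal,
    LinearMap.finrank_range_add_finrank_ker, finrank_euclideanSpace]

theorem card_sub_rank_le_sum_sq_one_sub [DecidableEq ι] (B : Matrix ι ι ℝ) :
    (Fintype.card ι : ℝ) - B.rank ≤ ∑ a, ∑ i, (1 - B) a i ^ 2 := by
  rw [← rank_add_finrank_ker_toEuclideanLin B, Nat.cast_add, add_sub_cancel_left]
  exact finrank_ker_toEuclideanLin_le_sum_sq_one_sub B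

/-- If `n ≥ 2k` (with `k ≥ 1`), then any `n×n` matrix `B` of rank at most `k` satisfies
`‖I_n - B‖_∞ ≥ 1/(2√k)`, i.e. some entry of `I_n - B` has absolute value `≥ 1/(2√k)`. -/
theorem stmt18 (n k : ℕ) (hk : 1 ≤ k) (hn : 2 * k ≤ n)
    (B : Matrix (Fin n) (Fin n) ℝ) (hrank : B.rank ≤ k) :
    ∃ a b, 1 / (2 * Real.sqrt k) ≤ |(1 : Matrix (Fin n) (Fin n) ℝ) a b - B a b| := by
  set e := Fin.castLEEmb hn
  set B' := B.submatrix e e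
  have hkpos : (0 : ℝ) < k := by exact_mod_cast hk
  have hsum : ∑ _p : Fin (2 * k) × Fin (2 * k), (1 / (2 * Real.sqrt k) : ℝ) ^ 2 = k := by
    simp only [Finset.sum_const, Finset.card_univ, Fintype.card_prod, Fintype.card_fin,
      nsmul_eq_mul, div_pow, mul_pow, Real.sq_sqrt hkpos.le]
    field_simp
    push_cast
    ring
  have hfrob : (k : ℝ) ≤ ∑ p : Fin (2 * k) × Fin (2 * k), (1 - B') p.1 p.2 ^ 2 := by
    have hrank' : (B'.rank : ℝ) ≤ k := by exact_mod_cast (rank_submatrix_le B e e).trans hrank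
    have := card_sub_rank_le_sum_sq_one_sub B'
    rw [Fintype.card_fin] at this
    rw [Fintype.sum_prod_type]
    push_cast at this
    linarith
  have : NeZero (2 * k) := ⟨by omega⟩
  obtain ⟨⟨a, b⟩, -, hab⟩ := Finset.exists_le_of_sum_le Finset.univ_nonempty (hsum ▸ hfrob)
  refine ⟨e a, e b, ?_⟩
  have hB' : (1 - B') a b = (1 : Matrix (Fin n) (Fin n) ℝ) (e a) (e b) - B (e a) (e b) := by
    simp [B', Matrix.one_apply, e.injective.eq_iff]
  rw [← hB', ← abs_of_pos (by positivity : (0 : ℝ) < 1 / (2 * Real.sqrt k))]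
  exact sq_le_sq.mp hab
end
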